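/- arXiv:2407.09428 — 4 statements merged into one kernel-verified Lean document; each statement's English description precedes it below -/
import Mathlib

section
/- Suppose for every bus i ∈ {1,…,B} there is a feasible storage: an initial state of charge x_i(0) ≥ 0 and a capacity S_i such that 0 ≤ x_i(0) + E_i(t) − Σ_{j≠i} F_ij(t) ≤ S_i for all t ∈ {0,…,N}, where the cumulative transferred energies are antisymmetric, F_ij(t) = −F_ji(t) for all i, j, t. Then the total storage capacity satisfies Σ_{i=1}^B S_i ≥ max_{t ∈ {0,…,N}} Σ_{i=1}^B E_i(t) − min_{t ∈ {0,…,N}} Σ_{i=1}^B E_i(t). (Lower-bound half of the Total Minimum Storage Capacity theorem.) -/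
open Finset

lemma antisym_double_sum_zero {B : ℕ} (f : Fin B → Fin B → ℝ)
    (h : ∀ i j, f i j = - f j i) :
    ∑ i, ∑ j ∈ Finset.univ.erase i, f i j = 0 := by
  have hswap : ∑ i, ∑ j ∈ Finset.univ.erase i, f i j
      = ∑ j, ∑ i ∈ Finset.univ.erase j, f i j := by
    rw [Finset.sum_comm' ]
    intro i j
    simp [Finset.mem_erase, and_comm, eq_comm, ne_comm]
  have : ∑ i, ∑ j ∈ Finset.univ.erase i, f i j
      = - ∑ i, ∑ j ∈ Finset.univ.erase i, f i j := by
    calc ∑ i, ∑ j ∈ Finset.univ.erase i, f i j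
        = ∑ j, ∑ i ∈ Finset.univ.erase j, f i j := hswap
      _ = ∑ j, ∑ i ∈ Finset.univ.erase j, - f j i := by
          apply Finset.sum_congr rfl; intro j _
          apply Finset.sum_congr rfl; intro i _; exact h i j
      _ = - ∑ j, ∑ i ∈ Finset.univ.erase j, f j i := by
          simp [Finset.sum_neg_distrib]
  linarith

/-- Lower-bound half of the Total Minimum Storage Capacity theorem: if every
bus has a feasible storage, then the total storage capacity is at least
`max_t ∑_i E_i(t) - min_t ∑_i E_i(t)`. -/
theorem total_min_storage_capacity_lower_bound
    (B N : ℕ) (hN : 1 ≤ N)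
    (E : Fin B → ℕ → ℝ) (hE0 : ∀ i, E i 0 = 0)
    (F : Fin B → Fin B → ℕ → ℝ)
    (hF0 : ∀ i j, F i j 0 = 0)
    (hFanti : ∀ i j t, F i j t = - F j i t)
    (x₀ S : Fin B → ℝ)
    (hx₀ : ∀ i, 0 ≤ x₀ i)
    (hfeas : ∀ i, ∀ t ≤ N,
      0 ≤ x₀ i + E i t - ∑ j ∈ Finset.univ.erase i, F i j t
      ∧ x₀ i + E i t - ∑ j ∈ Finset.univ.erase i, F i j t ≤ S i) :
    ∑ i, S i ≥
      (Finset.Icc 0 N).sup' (Finset.nonempty_Icc.mpr (Nat.zero_le N))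
        (fun t => ∑ i, E i t)
      - (Finset.Icc 0 N).inf' (Finset.nonempty_Icc.mpr (Nat.zero_le N))
        (fun t => ∑ i, E i t) := by
  -- For each t ≤ N : -∑x₀ ≤ ∑E(t) ≤ ∑S - ∑x₀
  have key : ∀ t ≤ N, - ∑ i, x₀ i ≤ ∑ i, E i t ∧ ∑ i, E i t ≤ ∑ i, S i - ∑ i, x₀ i := by
    intro t ht
    have h1 : 0 ≤ ∑ i, (x₀ i + E i t - ∑ j ∈ Finset.univ.erase i, F i j t) :=
      Finset.sum_nonneg fun i _ => (hfeas i t ht).1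
    have h2 : ∑ i, (x₀ i + E i t - ∑ j ∈ Finset.univ.erase i, F i j t) ≤ ∑ i, S i :=
      Finset.sum_le_sum fun i _ => (hfeas i t ht).2
    have hz : ∑ i, ∑ j ∈ Finset.univ.erase i, F i j t = 0 :=
      antisym_double_sum_zero (fun i j => F i j t) (fun i j => hFanti i j t)
    have heq : ∑ i, (x₀ i + E i t - ∑ j ∈ Finset.univ.erase i, F i j t)
        = ∑ i, x₀ i + ∑ i, E i t := by
      rw [Finset.sum_sub_distrib, Finset.sum_add_distrib, hz, sub_zero]
    rw [heq] at h1 h2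
    constructor <;> linarith
  obtain ⟨ts, hts, hsup⟩ := Finset.exists_mem_eq_sup' (Finset.nonempty_Icc.mpr (Nat.zero_le N))
    (fun t => ∑ i, E i t)
  obtain ⟨ti, hti, hinf⟩ := Finset.exists_mem_eq_inf' (Finset.nonempty_Icc.mpr (Nat.zero_le N))
    (fun t => ∑ i, E i t)
  rw [hsup, hinf]
  simp only [Finset.mem_Icc] at hts hti
  have hs := key ts hts.2
  have hi := key ti hti.2
  linarith [hs.2, hi.1]
end

section
/- For any family E_i : {0,1,…,N} → ℝ with E_i(0) = 0 for i ∈ {1,…,B} (with B ≥ 1), there exist antisymmetric cumulative transferred energies F_ij(t) = −F_ji(t) with F_ij(0) = 0, initial states of charge x_i(0) ≥ 0, and capacities S_i ≥ 0 such that 0 ≤ x_i(0) + E_i(t) − Σ_{j≠i} F_ij(t) ≤ S_i for every bus i and every t ∈ {0,…,N}, and the total capacity attains the bound: Σ_{i=1}^B S_i = max_{t ∈ {0,…,N}} Σ_{i=1}^B E_i(t) − min_{t ∈ {0,…,N}} Σ_{i=1}^B E_i(t). (Achievability half of the Total Minimum Storage Capacity theorem, under unlimited transmission capacity.) -/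
open Finset

/-- Achievability half of the Total Minimum Storage Capacity theorem: with
unlimited transmission capacity there exist antisymmetric transferred
energies, nonnegative initial states of charge, and nonnegative capacities
that are feasible at every bus and whose total equals
`max_t ∑_i E_i(t) - min_t ∑_i E_i(t)`. -/
theorem total_min_storage_capacity_achievable
    (B N : ℕ) (hB : 1 ≤ B) (hN : 1 ≤ N)
    (E : Fin B → ℕ → ℝ) (hE0 : ∀ i, E i 0 = 0) :
    ∃ (F : Fin B → Fin B → ℕ → ℝ) (x₀ S : Fin B → ℝ),
      (∀ i j t, F i j t = - F j i t)
      ∧ (∀ i j, F i j 0 = 0)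
      ∧ (∀ i, 0 ≤ x₀ i)
      ∧ (∀ i, 0 ≤ S i)
      ∧ (∀ i, ∀ t ≤ N,
          0 ≤ x₀ i + E i t - ∑ j ∈ Finset.univ.erase i, F i j t
          ∧ x₀ i + E i t - ∑ j ∈ Finset.univ.erase i, F i j t ≤ S i)
      ∧ ∑ i, S i =
          (Finset.Icc 0 N).sup' (Finset.nonempty_Icc.mpr (Nat.zero_le N))
            (fun t => ∑ i, E i t)
          - (Finset.Icc 0 N).inf' (Finset.nonempty_Icc.mpr (Nat.zero_le N))
            (fun t => ∑ i, E i t) := by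
  have hne : (Finset.Icc 0 N).Nonempty := Finset.nonempty_Icc.mpr (Nat.zero_le N)
  set G : ℕ → ℝ := fun t => ∑ i, E i t with hG
  set M : ℝ := (Finset.Icc 0 N).sup' hne G with hM
  set m : ℝ := (Finset.Icc 0 N).inf' hne G with hm
  have hG0 : G 0 = 0 := by simp [hG, hE0]
  have h0mem : (0 : ℕ) ∈ Finset.Icc 0 N := by simp
  have hm0 : m ≤ 0 := hG0 ▸ Finset.inf'_le G h0mem
  have hM0 : (0 : ℝ) ≤ M := hG0 ▸ Finset.le_sup' G h0mem
  have hmle : ∀ t ≤ N, m ≤ G t := fun t ht =>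
    Finset.inf'_le G (by simp [ht])
  have hleM : ∀ t ≤ N, G t ≤ M := fun t ht =>
    Finset.le_sup' G (by simp [ht])
  set i0 : Fin B := ⟨0, hB⟩ with hi0
  refine ⟨fun i j t => if i = i0 then (if j = i0 then 0 else -(E j t))
            else (if j = i0 then E i t else 0),
          fun i => if i = i0 then -m else 0,
          fun i => if i = i0 then M - m else 0, ?_, ?_, ?_, ?_, ?_, ?_⟩
  · intro i j t
    by_cases hi : i = i0 <;> by_cases hj : j = i0 <;> simp [hi, hj]
  · intro i j
    by_cases hi : i = i0 <;> by_cases hj : j = i0 <;> simp [hi, hj, hE0]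
  · intro i
    by_cases hi : i = i0 <;> simp [hi] <;> linarith
  · intro i
    by_cases hi : i = i0 <;> simp [hi]
    linarith [hmle 0 (Nat.zero_le N), hleM 0 (Nat.zero_le N)]
  · intro i t ht
    by_cases hi : i = i0
    · subst hi
      have hsum : ∑ j ∈ Finset.univ.erase i0,
          (if i0 = i0 then (if j = i0 then (0:ℝ) else -(E j t))
            else (if j = i0 then E i0 t else 0)) = -(G t - E i0 t) := by
        have : ∑ j ∈ Finset.univ.erase i0, E j t = G t - E i0 t := by
          have := Finset.add_sum_erase Finset.univ (fun j => E j t)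
            (Finset.mem_univ i0)
          simp only [hG]
          linarith
        rw [← this]
        rw [← Finset.sum_neg_distrib]
        refine Finset.sum_congr rfl fun j hj => ?_
        have hj' : j ≠ i0 := Finset.ne_of_mem_erase hj
        simp [hj']
      rw [hsum]
      simp only [if_pos rfl, if_true]
      constructor
      · linarith [hmle t ht]
      · linarith [hleM t ht]
    · have hsum : ∑ j ∈ Finset.univ.erase i,
          (if i = i0 then (if j = i0 then (0:ℝ) else -(E j t))
            else (if j = i0 then E i t else 0)) = E i t := by
        simp only [if_neg hi]
        rw [Finset.sum_ite_eq' (Finset.univ.erase i) i0 (fun _ => E i t)]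
        simp [Ne.symm hi]
      rw [hsum]
      simp [hi]
  · rw [Finset.sum_ite_eq' Finset.univ i0 (fun _ => M - m)]
    simp
end

section
/- Suppose SoC balance holds, x_i(0) = x_i(N) for every bus i, and the line flows are antisymmetric, f_ij(t) = −f_ji(t). If the total net energy over the cycle is positive, h Σ_{t=1}^N Σ_{i=1}^B (p⁺_i(t) − p⁻_i(t)) > 0, then generation curtailment is unavoidable: there exist a bus i and a slot t with p̄⁺_i(t) < p⁺_i(t). This holds regardless of storage capacities and line capacities. -/
open Finset

/-- If SoC balance holds, line flows are antisymmetric, and the total net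
energy over the cycle is positive, then generation curtailment is
unavoidable: some bus must curtail in some slot, regardless of storage and
line capacities. -/
theorem curtailment_unavoidable
    (B N : ℕ) (hN : 1 ≤ N) (h : ℝ) (hh : 0 < h)
    (pp pm pbp pbm : Fin B → ℕ → ℝ)
    (f : Fin B → Fin B → ℕ → ℝ)
    (x : Fin B → ℕ → ℝ)
    (hpp : ∀ i, ∀ t ∈ Finset.Icc 1 N, 0 ≤ pp i t)
    (hpm : ∀ i, ∀ t ∈ Finset.Icc 1 N, 0 ≤ pm i t)
    (hbp : ∀ i, ∀ t ∈ Finset.Icc 1 N, 0 ≤ pbp i t ∧ pbp i t ≤ pp i t)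
    (hbm : ∀ i, ∀ t ∈ Finset.Icc 1 N, 0 ≤ pbm i t ∧ pbm i t ≤ pm i t)
    (hfanti : ∀ i j t, f i j t = - f j i t)
    (hevol : ∀ i, ∀ t ∈ Finset.Icc 1 N,
      x i t = x i (t - 1) + h * (pbp i t - pbm i t)
        - h * ∑ j ∈ Finset.univ.erase i, f i j t)
    (hbal : ∀ i, x i 0 = x i N)
    (hpos : 0 < h * ∑ t ∈ Finset.Icc 1 N, ∑ i, (pp i t - pm i t)) :
    ∃ i, ∃ t ∈ Finset.Icc 1 N, pbp i t < pp i t := by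
  by_contra hc
  push_neg at hc
  -- so pbp i t = pp i t on the interval
  have heq : ∀ i, ∀ t ∈ Finset.Icc 1 N, pbp i t = pp i t := fun i t ht =>
    le_antisymm (hbp i t ht).2 (hc i t ht)
  -- self flows vanish
  have hself : ∀ i t, f i i t = 0 := by
    intro i t
    have := hfanti i i t
    linarith
  -- double flow sum vanishes
  have hflow : ∀ t, ∑ i, ∑ j ∈ Finset.univ.erase i, f i j t = 0 := by
    intro t
    have h1 : ∀ i : Fin B, ∑ j ∈ Finset.univ.erase i, f i j t = ∑ j, f i j t := by
      intro i
      rw [Finset.sum_erase_eq_sub (Finset.mem_univ i), hself i t, sub_zero]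
    simp only [h1]
    have h2 : ∑ i, ∑ j, f i j t = ∑ i, ∑ j, f j i t := Finset.sum_comm
    have h3 : ∑ i : Fin B, ∑ j, f j i t = -∑ i : Fin B, ∑ j, f i j t := by
      simp_rw [← Finset.sum_neg_distrib]
      exact Finset.sum_congr rfl fun i _ => Finset.sum_congr rfl fun j _ => by
        rw [hfanti j i t]
    linarith [h2, h3]
  -- telescope each bus over the cycle
  have htel : ∀ i : Fin B,
      ∑ t ∈ Finset.Icc 1 N, (x i t - x i (t - 1)) = 0 := by
    intro i
    have : ∑ t ∈ Finset.Icc 1 N, (x i t - x i (t - 1))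
        = ∑ k ∈ Finset.range N, (x i (k + 1) - x i k) := by
      rw [← Finset.Ico_add_one_right_eq_Icc, Finset.sum_Ico_eq_sum_range]
      apply Finset.sum_congr (by norm_num)
      intro k _
      simp [Nat.add_comm 1 k]
    rw [this, Finset.sum_range_sub (fun k => x i k), ← hbal i, sub_self]
  -- combine
  have hkey : ∑ t ∈ Finset.Icc 1 N, ∑ i, h * (pbp i t - pbm i t) = 0 := by
    have hterm : ∀ i : Fin B, ∀ t ∈ Finset.Icc 1 N,
        x i t - x i (t - 1) = h * (pbp i t - pbm i t)
          - h * ∑ j ∈ Finset.univ.erase i, f i j t := by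
      intro i t ht
      have := hevol i t ht
      linarith
    have : ∑ t ∈ Finset.Icc 1 N, ∑ i, (x i t - x i (t - 1)) = 0 := by
      rw [Finset.sum_comm]
      exact Finset.sum_eq_zero fun i _ => htel i
    calc ∑ t ∈ Finset.Icc 1 N, ∑ i, h * (pbp i t - pbm i t)
        = ∑ t ∈ Finset.Icc 1 N, ∑ i,
            ((x i t - x i (t - 1)) + h * ∑ j ∈ Finset.univ.erase i, f i j t) := by
          apply Finset.sum_congr rfl
          intro t ht
          apply Finset.sum_congr rfl
          intro i _
          have := hterm i t ht
          linarith
      _ = ∑ t ∈ Finset.Icc 1 N, (∑ i, (x i t - x i (t - 1))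
            + h * ∑ i, ∑ j ∈ Finset.univ.erase i, f i j t) := by
          apply Finset.sum_congr rfl
          intro t _
          rw [Finset.sum_add_distrib, Finset.mul_sum]
      _ = 0 := by
          rw [Finset.sum_add_distrib, this]
          simp only [hflow, mul_zero, Finset.sum_const_zero, add_zero]
  -- compare with hpos
  have hle : ∑ t ∈ Finset.Icc 1 N, ∑ i, (pp i t - pm i t)
      ≤ ∑ t ∈ Finset.Icc 1 N, ∑ i, (pbp i t - pbm i t) := by
    apply Finset.sum_le_sum
    intro t ht
    apply Finset.sum_le_sum
    intro i _
    have h1 := heq i t ht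
    have h2 := (hbm i t ht).2
    linarith
  have h0 : ∑ t ∈ Finset.Icc 1 N, ∑ i, (pbp i t - pbm i t) = 0 := by
    have : h * ∑ t ∈ Finset.Icc 1 N, ∑ i, (pbp i t - pbm i t) = 0 := by
      rw [Finset.mul_sum]
      simp only [Finset.mul_sum]
      exact hkey
    exact (mul_eq_zero.mp this).resolve_left (ne_of_gt hh)
  have hpos' : 0 < ∑ t ∈ Finset.Icc 1 N, ∑ i, (pp i t - pm i t) := by
    by_contra hx
    push_neg at hx
    nlinarith
  linarith
end

section
/- Suppose SoC balance holds, x_i(0) = x_i(N) for every bus i, and the line flows are antisymmetric, f_ij(t) = −f_ji(t). If the total net energy over the cycle is negative, h Σ_{t=1}^N Σ_{i=1}^B (p⁺_i(t) − p⁻_i(t)) < 0, then load shedding is unavoidable: there exist a bus i and a slot t with p̄⁻_i(t) < p⁻_i(t). This holds regardless of storage capacities and line capacities. -/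
open Finset

/-- If SoC balance holds, line flows are antisymmetric, and the total net
energy over the cycle is negative, then load shedding is unavoidable: some
bus must shed load in some slot, regardless of storage and line
capacities. -/
theorem load_shedding_unavoidable
    (B N : ℕ) (hN : 1 ≤ N) (h : ℝ) (hh : 0 < h)
    (pp pm pbp pbm : Fin B → ℕ → ℝ)
    (f : Fin B → Fin B → ℕ → ℝ)
    (x : Fin B → ℕ → ℝ)
    (hpp : ∀ i, ∀ t ∈ Finset.Icc 1 N, 0 ≤ pp i t)
    (hpm : ∀ i, ∀ t ∈ Finset.Icc 1 N, 0 ≤ pm i t)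
    (hbp : ∀ i, ∀ t ∈ Finset.Icc 1 N, 0 ≤ pbp i t ∧ pbp i t ≤ pp i t)
    (hbm : ∀ i, ∀ t ∈ Finset.Icc 1 N, 0 ≤ pbm i t ∧ pbm i t ≤ pm i t)
    (hfanti : ∀ i j t, f i j t = - f j i t)
    (hevol : ∀ i, ∀ t ∈ Finset.Icc 1 N,
      x i t = x i (t - 1) + h * (pbp i t - pbm i t)
        - h * ∑ j ∈ Finset.univ.erase i, f i j t)
    (hbal : ∀ i, x i 0 = x i N)
    (hneg : h * ∑ t ∈ Finset.Icc 1 N, ∑ i, (pp i t - pm i t) < 0) :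
    ∃ i, ∃ t ∈ Finset.Icc 1 N, pbm i t < pm i t := by
  by_contra hcon
  push_neg at hcon
  -- pbm = pm on the relevant range
  have hbmeq : ∀ i, ∀ t ∈ Finset.Icc 1 N, pbm i t = pm i t := fun i t ht =>
    le_antisymm ((hbm i t ht).2) (hcon i t ht)
  -- flows sum to zero
  have key : ∀ t, ∑ i : Fin B, ∑ j ∈ Finset.univ.erase i, f i j t = 0 := by
    intro t
    set S := ∑ i : Fin B, ∑ j ∈ Finset.univ.erase i, f i j t with hS
    have hrw : ∀ i : Fin B, ∀ g : Fin B → ℝ,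
        ∑ j ∈ Finset.univ.erase i, g j = ∑ j : Fin B, if j ≠ i then g j else 0 := by
      intro i g
      rw [← Finset.filter_ne']
      exact Finset.sum_filter _ _
    have hSS : S = -S := by
      calc S = ∑ i : Fin B, ∑ j : Fin B, if j ≠ i then f i j t else 0 := by
              simp_rw [hS, hrw]
        _ = ∑ j : Fin B, ∑ i : Fin B, if j ≠ i then f i j t else 0 := Finset.sum_comm
        _ = ∑ j : Fin B, ∑ i : Fin B, if i ≠ j then -(f j i t) else 0 := by
              apply Finset.sum_congr rfl; intro j _
              apply Finset.sum_congr rfl; intro i _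
              rcases eq_or_ne i j with rfl | hij
              · simp
              · simp [hij, hij.symm, hfanti i j t]
        _ = -S := by
              simp_rw [hS, hrw]
              rw [← Finset.sum_neg_distrib]
              apply Finset.sum_congr rfl; intro j _
              rw [← Finset.sum_neg_distrib]
              apply Finset.sum_congr rfl; intro i _
              split <;> simp
    linarith
  -- telescoping over the cycle for each bus
  have tele : ∀ i : Fin B,
      x i N - x i 0 = ∑ t ∈ Finset.Icc 1 N, (x i t - x i (t - 1)) := by
    intro i
    have : ∑ t ∈ Finset.Icc 1 N, (x i t - x i (t - 1))
        = ∑ k ∈ Finset.range N, (x i (k + 1) - x i k) := by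
      have h1 : Finset.Icc 1 N = Finset.Ico 1 (N + 1) := by
        rw [Finset.Ico_add_one_right_eq_Icc]
      rw [h1, Finset.sum_Ico_eq_sum_range]
      simp [Nat.add_comm]
    rw [this, Finset.sum_range_sub (fun k => x i k)]
  have step : ∀ i : Fin B, ∀ t ∈ Finset.Icc 1 N,
      x i t - x i (t - 1) = h * (pbp i t - pbm i t)
        - h * ∑ j ∈ Finset.univ.erase i, f i j t := by
    intro i t ht
    have := hevol i t ht
    linarith
  have total : ∑ i : Fin B, (x i N - x i 0)
      = h * ∑ t ∈ Finset.Icc 1 N, ∑ i : Fin B, (pbp i t - pbm i t) := by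
    calc ∑ i : Fin B, (x i N - x i 0)
        = ∑ i : Fin B, ∑ t ∈ Finset.Icc 1 N, (x i t - x i (t-1)) := by
          exact Finset.sum_congr rfl fun i _ => tele i
      _ = ∑ t ∈ Finset.Icc 1 N, ∑ i : Fin B, (x i t - x i (t-1)) := Finset.sum_comm
      _ = ∑ t ∈ Finset.Icc 1 N, ∑ i : Fin B,
            (h * (pbp i t - pbm i t) - h * ∑ j ∈ Finset.univ.erase i, f i j t) := by
          apply Finset.sum_congr rfl; intro t ht
          exact Finset.sum_congr rfl fun i _ => step i t ht
      _ = h * ∑ t ∈ Finset.Icc 1 N, ∑ i : Fin B, (pbp i t - pbm i t) := by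
          rw [Finset.mul_sum]
          apply Finset.sum_congr rfl; intro t ht
          rw [Finset.sum_sub_distrib, ← Finset.mul_sum, ← Finset.mul_sum, key t]
          ring
  have hzero : ∑ i : Fin B, (x i N - x i 0) = 0 := by
    apply Finset.sum_eq_zero; intro i _
    rw [hbal i]; ring
  rw [hzero] at total
  have hsum0 : ∑ t ∈ Finset.Icc 1 N, ∑ i : Fin B, (pbp i t - pbm i t) = 0 := by
    rcases mul_eq_zero.mp total.symm with h1 | h1
    · exact absurd h1 (ne_of_gt hh)
    · exact h1
  have hge : ∑ t ∈ Finset.Icc 1 N, ∑ i : Fin B, (pbp i t - pbm i t)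
      ≤ ∑ t ∈ Finset.Icc 1 N, ∑ i : Fin B, (pp i t - pm i t) := by
    apply Finset.sum_le_sum; intro t ht
    apply Finset.sum_le_sum; intro i _
    have h1 := (hbp i t ht).2
    have h2 := hbmeq i t ht
    linarith
  rw [hsum0] at hge
  nlinarith
end
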